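/- The Frobenius additive FFT multiplication count F(m, l), defined by the recurrence F(0, l) = 0, F(k, 0) = F(k-1, 0) + F(k-1, 1) + 2^{k-1} M(1), F(k, l) = F(k-1, l+1) + 2^{k-1} M(l) if l is a power of two, and F(k, l) = 2 F(k-1, l+1) + 2^{k-1} M(r(l)) otherwise (where r(l) is the smallest power of two ≥ l), satisfies F(m, 0) ≤ (1/2) m 2^m · M(d)/d and F(m, l) ≤ (1/2) m 2^m · (M(d)/d) · r(l) for l > 0, whenever m + l ≤ d, d is a power of two, and M: ℕ → ℝ≥0 is a function with M(l)/l nondecreasing and M(l) defined for powers-of-two arguments with M(l) ≤ (M(d)/d)·l. -/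

import Mathlib

open Polynomial Finset

noncomputable section

/-- The finite field with `2^d` elements. -/
abbrev GF (d : ℕ) := GaloisField 2 d

/-- `n` is a power of two. -/
def IsPow2 (n : ℕ) : Prop := ∃ m : ℕ, n = 2 ^ m

/-- A Cantor sequence `u₀, u₁, …`: `u₀² + u₀ = 1` and
`uᵢ² + uᵢ = u₀u₁⋯uᵢ₋₁ +` a sum of lower monomials. -/
def IsCantorSeq {F : Type} [Field F] (u : ℕ → F) : Prop :=
  u 0 ^ 2 + u 0 = 1 ∧
  ∀ i, 0 < i → ∃ S : Finset (Finset ℕ),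
    (∀ T ∈ S, T ⊂ Finset.range i) ∧
    u i ^ 2 + u i = (∏ j ∈ Finset.range i, u j) + ∑ T ∈ S, ∏ j ∈ T, u j

/-- Cantor basis vectors: `vᵢ = ∏_{j : bit j of i is 1} uⱼ`. -/
def cv {F : Type} [Field F] (u : ℕ → F) (i : ℕ) : F :=
  ∏ j ∈ (Finset.range i).filter (fun j => i.testBit j), u j

/-- `W_k`: the `𝔽₂`-span of `v₀, …, v_{k-1}`. -/
def Wspan (d : ℕ) (v : ℕ → GF d) (k : ℕ) : Submodule (ZMod 2) (GF d) :=
  Submodule.span (ZMod 2) (v '' Set.Iio k)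

/-- The subspace polynomial `s_k` as a function: `s_k(x) = ∏_{a ∈ W_k} (x - a)`. -/
def sFun (d : ℕ) (v : ℕ → GF d) (k : ℕ) (x : GF d) : GF d :=
  ∏ a ∈ (Set.toFinite ((Wspan d v k : Set (GF d)))).toFinset, (x - a)

/-- The subspace polynomial `s_k` as a polynomial. -/
def sPoly (d : ℕ) (v : ℕ → GF d) (k : ℕ) : Polynomial (GF d) :=
  ∏ a ∈ (Set.toFinite ((Wspan d v k : Set (GF d)))).toFinset, (X - C a)

/-- The cross-section pieces `Σᵢ` (coordinates at power-of-two positions vanish). -/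
def SigmaSet (d : ℕ) (u : ℕ → GF d) (i : ℕ) : Set (GF d) :=
  if i = 0 then {0} else
    { x | ∃ c : ℕ → ZMod 2, (∀ k, IsPow2 k → c k = 0) ∧
        x = cv u (i - 1) + ∑ k ∈ Finset.Icc 1 (i - 1), c k • cv u (i - 1 - k) }

/-- The novel polynomial basis `X_k = ∏_{i : bit i of k} s_i`. -/
def Xpoly (d : ℕ) (v : ℕ → GF d) (k : ℕ) : Polynomial (GF d) :=
  ∏ i ∈ (Finset.range d).filter (fun i => k.testBit i), sPoly d v i

/-- `rpow2 l` is the smallest power of two `≥ l` (with `rpow2 0 = 1`). -/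
def rpow2 (l : ℕ) : ℕ := 2 ^ Nat.clog 2 l

/-- The multiplication count of the Frobenius additive FFT. -/
def Frec (M : ℕ → ℝ) : ℕ → ℕ → ℝ
  | 0, _ => 0
  | k + 1, 0 => Frec M k 0 + Frec M k 1 + 2 ^ k * M 1
  | k + 1, l + 1 =>
    if l + 1 = 2 ^ Nat.log 2 (l + 1) then Frec M k (l + 2) + 2 ^ k * M (l + 1)
    else 2 * Frec M k (l + 2) + 2 ^ k * M (rpow2 (l + 1))

/-! The bound is an exact solution of the recurrence once each `M(2^j)` is replaced by
`C · 2^j`: in every branch the two terms contribute `k 2^k C r(l)` and `2^k C r(l)`, because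
`r(l + 1) = 2 r(l)` when `l` is a power of two and `r(l + 1) = r(l)` otherwise. -/

@[simp]
theorem rpow2_zero : rpow2 0 = 1 := by
  simp [rpow2]

@[simp]
theorem rpow2_one : rpow2 1 = 1 := by
  simp [rpow2]

theorem rpow2_two_pow (j : ℕ) : rpow2 (2 ^ j) = 2 ^ j := by
  rw [rpow2, Nat.clog_pow 2 j one_lt_two]

theorem rpow2_two_pow_add_one (j : ℕ) : rpow2 (2 ^ j + 1) = 2 * 2 ^ j := by
  have hclog : Nat.clog 2 (2 ^ j + 1) = j + 1 := by
    refine le_antisymm (Nat.clog_le_of_le_pow ?_) ?_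
    · rw [pow_succ]
      linarith [Nat.one_le_two_pow (n := j)]
    · exact Nat.succ_le_of_lt ((Nat.lt_clog_iff_pow_lt one_lt_two).2 (Nat.lt_succ_self _))
  rw [rpow2, hclog, pow_succ']

theorem rpow2_add_one_of_eq_pow {n : ℕ} (h : n = 2 ^ Nat.log 2 n) :
    rpow2 (n + 1) = 2 * rpow2 n := by
  rw [h, rpow2_two_pow_add_one, rpow2_two_pow]

theorem rpow2_add_one_of_ne_pow {n : ℕ} (h : n ≠ 2 ^ Nat.log 2 n) :
    rpow2 (n + 1) = rpow2 n := by
  have hne : 2 ^ Nat.clog 2 n ≠ n := by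
    intro hpow
    apply h
    conv_rhs => rw [← hpow, Nat.log_pow one_lt_two]
    exact hpow.symm
  rw [rpow2, rpow2, ← (Nat.clog_eq_clog_succ_iff one_lt_two).2 hne]

theorem Frec_le {M : ℕ → ℝ} {C : ℝ} (hM : ∀ j, M (2 ^ j) ≤ C * 2 ^ j) (m l : ℕ) :
    Frec M m l ≤ 1 / 2 * m * 2 ^ m * C * rpow2 l := by
  induction m generalizing l with
  | zero => simp [Frec]
  | succ k ih =>
    rcases l with _ | n
    · have hM1 : M 1 ≤ C := by simpa using hM 0
      have h0 := ih 0
      have h1 := ih 1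
      simp only [rpow2_zero, rpow2_one, Nat.cast_one, mul_one] at h0 h1 ⊢
      calc Frec M (k + 1) 0 = Frec M k 0 + Frec M k 1 + 2 ^ k * M 1 := rfl
        _ ≤ 1 / 2 * k * 2 ^ k * C + 1 / 2 * k * 2 ^ k * C + 2 ^ k * C := by gcongr
        _ = _ := by push_cast; ring
    · have hnext := ih (n + 2)
      by_cases hpow : n + 1 = 2 ^ Nat.log 2 (n + 1)
      · have hr : (rpow2 (n + 2) : ℝ) = 2 * rpow2 (n + 1) := by
          exact_mod_cast rpow2_add_one_of_eq_pow hpow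
        have hMn : M (n + 1) ≤ C * rpow2 (n + 1) := by
          rw [hpow, rpow2_two_pow]
          exact_mod_cast hM _
        rw [hr] at hnext
        calc Frec M (k + 1) (n + 1) = Frec M k (n + 2) + 2 ^ k * M (n + 1) := by
              simp only [Frec, if_pos hpow]
          _ ≤ 1 / 2 * k * 2 ^ k * C * (2 * rpow2 (n + 1)) + 2 ^ k * (C * rpow2 (n + 1)) := by
              gcongr
          _ = _ := by push_cast; ring
      · have hr : (rpow2 (n + 2) : ℝ) = rpow2 (n + 1) := by
          exact_mod_cast rpow2_add_one_of_ne_pow hpow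
        have hMn : M (rpow2 (n + 1)) ≤ C * rpow2 (n + 1) := by exact_mod_cast hM _
        rw [hr] at hnext
        calc Frec M (k + 1) (n + 1) = 2 * Frec M k (n + 2) + 2 ^ k * M (rpow2 (n + 1)) := by
              simp only [Frec, if_neg hpow]
          _ ≤ 2 * (1 / 2 * k * 2 ^ k * C * rpow2 (n + 1)) + 2 ^ k * (C * rpow2 (n + 1)) := by
              gcongr
          _ = _ := by push_cast; ring

theorem FAFFT_mul_complexity_general (d : ℕ) (M : ℕ → ℝ)
    (hMd : ∀ l : ℕ, M l ≤ M d / d * l)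
    (m l : ℕ) :
    (l = 0 → Frec M m 0 ≤ (1 / 2) * m * 2 ^ m * (M d / d)) ∧
    (0 < l → Frec M m l ≤ (1 / 2) * m * 2 ^ m * (M d / d) * rpow2 l) := by
  have hbound := Frec_le (C := M d / d) (fun j => by exact_mod_cast hMd (2 ^ j)) m
  exact ⟨fun _ => by simpa using hbound 0, fun _ => hbound l⟩

/-- The multiplication count `F(m, l)` of the Frobenius additive FFT satisfies
`F(m, 0) ≤ ½ m 2^m · M(d)/d` and `F(m, l) ≤ ½ m 2^m · (M(d)/d) · r(l)` for `l > 0`,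
whenever `m + l ≤ d`, `d` is a power of two, `M(l)/l` is nondecreasing, and
`M(l) ≤ (M(d)/d)·l`. -/
theorem FAFFT_mul_complexity (d e : ℕ) (hd : d = 2 ^ e) (M : ℕ → ℝ)
    (hM0 : ∀ l, 0 ≤ M l)
    (hMmono : ∀ a b : ℕ, 0 < a → a ≤ b → M a / a ≤ M b / b)
    (hMd : ∀ l : ℕ, M l ≤ M d / d * l)
    (m l : ℕ) (hml : m + l ≤ d) :
    (l = 0 → Frec M m 0 ≤ (1 / 2) * m * 2 ^ m * (M d / d)) ∧
    (0 < l → Frec M m l ≤ (1 / 2) * m * 2 ^ m * (M d / d) * rpow2 l) :=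
  FAFFT_mul_complexity_general d M hMd m l
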